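/- Let n ≥ 1, let λ₀, λ₁, λ₂ be complex numbers such that every zero of U(z) = λ₀ + λ₁·n·z + λ₂·(n(n−1)/2)·z² lies in the half-plane |z| ≤ |z − n/2|, and let B be the associated operator of the class ℬ_n. If P is a complex polynomial of degree at most n with no zero in |z| < 1, then for every complex number α with |α| ≤ 1, every R > 1 and every z with |z| ≥ 1, one has | B[P∘σ](z) − α·B[P](z) | ≤ | B[P*∘σ](z) − α·B[P*](z) | − (|Rⁿ − α|·|Λ_n| − |1 − α|·|λ₀|)·m, where P*(z) = zⁿ·conj(P(1/conj(z))) and m = min_{|z|=1} |P(z)|. -/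

import Mathlib

open Polynomial Real

/-- The `ℬₙ`-operator with parameters `l0, l1, l2`:
`B[P](z) = λ₀·P(z) + λ₁·(nz/2)·P′(z) + (λ₂/2)·(nz/2)²·P″(z)`. -/
noncomputable def Bop (n : ℕ) (l0 l1 l2 : ℂ) (P : Polynomial ℂ) : Polynomial ℂ :=
  Polynomial.C l0 * P
    + Polynomial.C (l1 * ((n : ℂ) / 2)) * (Polynomial.X * derivative P)
    + Polynomial.C (l2 / 2 * ((n : ℂ) / 2) ^ 2)
        * (Polynomial.X ^ 2 * derivative (derivative P))

/-- Every zero of `U(z) = λ₀ + λ₁·n·z + λ₂·(n(n−1)/2)·z²` lies in the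
half-plane `|z| ≤ |z − n/2|`. -/
def AdmissibleParams (n : ℕ) (l0 l1 l2 : ℂ) : Prop :=
  ∀ z : ℂ, l0 + l1 * (n : ℂ) * z + l2 * ((n : ℂ) * ((n : ℂ) - 1) / 2) * z ^ 2 = 0 →
    ‖z‖ ≤ ‖(z - (n : ℂ) / 2)‖

/-- `Λₙ = λ₀ + λ₁·n²/2 + λ₂·n³(n−1)/8`. -/
noncomputable def Lam (n : ℕ) (l0 l1 l2 : ℂ) : ℂ :=
  l0 + l1 * (n : ℂ) ^ 2 / 2 + l2 * (n : ℂ) ^ 3 * ((n : ℂ) - 1) / 8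

/-- The polynomial `z ↦ P(Rz)`, i.e. `P ∘ σ` with `σ(z) = Rz`. -/
noncomputable def dilate (R : ℝ) (P : Polynomial ℂ) : Polynomial ℂ :=
  P.comp (Polynomial.C (R : ℂ) * Polynomial.X)

/-- `‖f‖_p = ((1/2π) ∫₀^{2π} |f(e^{iθ})|^p dθ)^{1/p}`. -/
noncomputable def circNorm (p : ℝ) (f : ℂ → ℂ) : ℝ :=
  ((2 * π)⁻¹ * ∫ θ in (0:ℝ)..(2 * π),
      ‖(f (Complex.exp (θ * Complex.I)))‖ ^ p) ^ (1 / p)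

/-- `min_{|z|=1} |f(z)|`. -/
noncomputable def minModulus (f : ℂ → ℂ) : ℝ :=
  sInf ((fun z => ‖(f z)‖) '' {z : ℂ | ‖z‖ = 1})

/-- `max_{|z|=1} |f(z)|`. -/
noncomputable def maxModulus (f : ℂ → ℂ) : ℝ :=
  sSup ((fun z => ‖(f z)‖) '' {z : ℂ | ‖z‖ = 1})

/-- The conjugate-reciprocal polynomial `Q*(z) = zⁿ·conj(Q(1/conj z))`,
whose `j`-th coefficient is the conjugate of the `(n−j)`-th coefficient of `Q`. -/
noncomputable def conjRecip (n : ℕ) (Q : Polynomial ℂ) : Polynomial ℂ :=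
  (Q.map (starRingEnd ℂ)).reflect n

/-!
Write `T f = B[f∘σ](z) − α·B[f](z)`. For `|z| > 1`, `T W ≠ 0` whenever `W` has degree `n` and all
zeros in the closed unit disk: `W(R·) − αW` again has its zeros in the disk, and `n(n−1)·B[W](w)` is
the composition of two generalized polar derivatives, one for each linear factor of `U`, whose poles
lie outside the disk by the admissibility condition, so Laguerre's theorem applies twice.
Hence `|T H| ≤ |T F|` as soon as every `F − μH` with `|μ| < 1` has degree `n` and no zeros outside
the disk. Applied to `P + t·m` against its conjugate reciprocal (`|t| < 1`) and to `m·Xⁿ` against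
`P*` (minimum modulus principle), this gives `|T P + t·b| ≤ |T P* + t̄·d|` with `|d| ≤ |T P*|`;
choosing the phase of `t` and letting `|t| → 1` yields the estimate, and continuity in `z` extends
it to `|z| = 1`.
-/

open Metric
open scoped ComplexConjugate

theorem norm_le_one_of_mem_roots {f : ℂ[X]} (hf : ∀ v : ℂ, 1 < ‖v‖ → f.eval v ≠ 0) {a : ℂ}
    (ha : a ∈ f.roots) : ‖a‖ ≤ 1 :=
  not_lt.mp fun h => hf a h (mem_roots'.mp ha).2

theorem one_le_norm_of_mem_roots {f : ℂ[X]} (hf : ∀ v : ℂ, ‖v‖ < 1 → f.eval v ≠ 0) {a : ℂ}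
    (ha : a ∈ f.roots) : 1 ≤ ‖a‖ :=
  not_lt.mp fun h => hf a h (mem_roots'.mp ha).2

/-- For `k ≥ 0`, `{u | ‖w * u - k‖ ≤ ‖u‖}` is the closed disk with centre `k * conj w / (‖w‖² - 1)`
and radius `k / (‖w‖² - 1)`. -/
theorem norm_mul_sub_le_norm_iff {w : ℂ} (hw : 1 < ‖w‖) {k : ℝ} (hk : 0 ≤ k) (u : ℂ) :
    ‖w * u - k‖ ≤ ‖u‖ ↔ ‖((‖w‖ ^ 2 - 1 : ℝ) : ℂ) * u - k * conj w‖ ≤ k := by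
  have key : (‖w‖ ^ 2 - 1) * (‖w * u - k‖ ^ 2 - ‖u‖ ^ 2)
      = ‖((‖w‖ ^ 2 - 1 : ℝ) : ℂ) * u - k * conj w‖ ^ 2 - k ^ 2 := by
    simp only [Complex.sq_norm, Complex.normSq_apply, Complex.sub_re, Complex.sub_im,
      Complex.mul_re, Complex.mul_im, Complex.ofReal_re, Complex.ofReal_im, Complex.conj_re,
      Complex.conj_im]
    ring
  have hs : 0 < ‖w‖ ^ 2 - 1 := by nlinarith
  rw [← sq_le_sq₀ (norm_nonneg _) (norm_nonneg _), ← sq_le_sq₀ (norm_nonneg _) hk]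
  constructor <;> intro h <;> nlinarith

/-- Laguerre: the mean of the points `1 / (w - a)` stays in the disk of
`norm_mul_sub_le_norm_iff`. -/
theorem norm_mul_sum_inv_sub_sub_card_le {s : Multiset ℂ} (hs : ∀ a ∈ s, ‖a‖ ≤ 1) {w : ℂ}
    (hw : 1 < ‖w‖) :
    ‖w * (s.map fun a => 1 / (w - a)).sum - Multiset.card s‖
      ≤ ‖(s.map fun a => 1 / (w - a)).sum‖ := by
  have hterm : ∀ a ∈ s, ‖((‖w‖ ^ 2 - 1 : ℝ) : ℂ) * (1 / (w - a)) - conj w‖ ≤ 1 := by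
    intro a ha
    have hwa : w - a ≠ 0 := fun h => by linarith [hs a ha, sub_eq_zero.mp h ▸ hw]
    have h1 : ‖w * (1 / (w - a)) - ((1 : ℝ) : ℂ)‖ ≤ ‖1 / (w - a)‖ := by
      rw [Complex.ofReal_one, show w * (1 / (w - a)) - 1 = a * (1 / (w - a)) by field_simp; ring,
        norm_mul]
      exact mul_le_of_le_one_left (norm_nonneg _) (hs a ha)
    simpa using (norm_mul_sub_le_norm_iff hw zero_le_one _).mp h1
  refine (norm_mul_sub_le_norm_iff hw (Nat.cast_nonneg _) _).mpr ?_
  calc ‖((‖w‖ ^ 2 - 1 : ℝ) : ℂ) * (s.map fun a => 1 / (w - a)).sum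
        - ((Multiset.card s : ℝ) : ℂ) * conj w‖
      = ‖(s.map fun a => ((‖w‖ ^ 2 - 1 : ℝ) : ℂ) * (1 / (w - a)) - conj w).sum‖ := by
        rw [Multiset.sum_map_sub, Multiset.sum_map_mul_left, Multiset.map_const',
          Multiset.sum_replicate, nsmul_eq_mul, Complex.ofReal_natCast]
    _ ≤ (s.map fun a => ‖((‖w‖ ^ 2 - 1 : ℝ) : ℂ) * (1 / (w - a)) - conj w‖).sum :=
        (norm_multiset_sum_le _).trans_eq (by rw [Multiset.map_map]; rfl)
    _ ≤ (s.map fun _ => (1 : ℝ)).sum := Multiset.sum_map_le_sum_map _ _ hterm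
    _ = Multiset.card s := by simp

/-- The polar derivative of `f`, viewed as a polynomial of degree `k`, with respect to the pole
`d / c`, written homogeneously so that `c = 0` gives `d • f'`. -/
noncomputable def polarDeriv (k : ℕ) (c d : ℂ) (f : ℂ[X]) : ℂ[X] :=
  C (c * k) * f + (C d - C c * X) * derivative f

@[simp]
theorem eval_polarDeriv (k : ℕ) (c d : ℂ) (f : ℂ[X]) (w : ℂ) :
    (polarDeriv k c d f).eval w = c * k * f.eval w + (d - c * w) * (derivative f).eval w := by
  simp [polarDeriv]

theorem polarDeriv_eval_ne_zero {k : ℕ} {f : ℂ[X]} (hfk : f.natDegree = k) (hk : 0 < k)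
    (hf : ∀ v : ℂ, 1 < ‖v‖ → f.eval v ≠ 0) {c d : ℂ} (hcd : ‖c‖ < ‖d‖) {w : ℂ}
    (hw : 1 < ‖w‖) : (polarDeriv k c d f).eval w ≠ 0 := by
  intro h
  have hsplit := IsAlgClosed.splits f
  have hfw := hf w hw
  set S := (f.roots.map fun a => 1 / (w - a)).sum
  have hS : (c * w - d) * S = c * k := by
    rw [eval_polarDeriv, hsplit.eval_derivative_eq_eval_mul_sum hfw] at h
    exact mul_left_cancel₀ hfw (by linear_combination -h)
  have hdisk := norm_mul_sum_inv_sub_sub_card_le (fun a ha => norm_le_one_of_mem_roots hf ha) hw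
  rw [← hsplit.natDegree_eq_card_roots, hfk] at hdisk
  have := mul_le_mul_of_nonneg_left hdisk (norm_nonneg (c * w - d))
  rw [← norm_mul, ← norm_mul, show (c * w - d) * (w * S - k) = k * d by linear_combination w * hS,
    hS, norm_mul, norm_mul, Complex.norm_natCast, mul_comm ‖c‖] at this
  exact absurd this (not_le.mpr (mul_lt_mul_of_pos_left hcd (by exact_mod_cast hk)))

theorem coeff_polarDeriv (k : ℕ) (c d : ℂ) (f : ℂ[X]) (j : ℕ) :
    (polarDeriv k c d f).coeff j
      = c * (k - j) * f.coeff j + d * (j + 1) * f.coeff (j + 1) := by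
  rcases j with _ | j
  · simp [polarDeriv, coeff_derivative, sub_mul, mul_assoc]
  · simp only [polarDeriv, coeff_add, coeff_C_mul, sub_mul, coeff_sub, mul_assoc, coeff_X_mul,
      coeff_derivative]
    push_cast
    ring

theorem derivative_polarDeriv (k : ℕ) (c d : ℂ) (f : ℂ[X]) :
    derivative (polarDeriv (k + 1) c d f) = polarDeriv k c d (derivative f) := by
  simp only [polarDeriv, derivative_add, derivative_mul, derivative_C, derivative_sub,
    derivative_X, zero_mul, zero_add, zero_sub, mul_one]
  push_cast
  rw [C_mul, C_mul, C_add, C_1]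
  ring

theorem norm_nextCoeff_le {f : ℂ[X]} (hf : ∀ v : ℂ, 1 < ‖v‖ → f.eval v ≠ 0) :
    ‖f.nextCoeff‖ ≤ f.natDegree * ‖f.leadingCoeff‖ := by
  have hsplit := IsAlgClosed.splits f
  rw [hsplit.nextCoeff_eq_neg_sum_roots_mul_leadingCoeff, norm_mul, norm_neg, mul_comm]
  refine mul_le_mul_of_nonneg_right ?_ (norm_nonneg _)
  calc ‖f.roots.sum‖ ≤ (f.roots.map fun a => ‖a‖).sum := norm_multiset_sum_le _
    _ ≤ (f.roots.map fun _ => (1 : ℝ)).sum :=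
        Multiset.sum_map_le_sum_map _ _ fun _ ha => norm_le_one_of_mem_roots hf ha
    _ = f.natDegree := by simp [hsplit.natDegree_eq_card_roots]

theorem natDegree_polarDeriv {k : ℕ} {f : ℂ[X]} (hfk : f.natDegree = k) (hk : 0 < k)
    (hf : ∀ v : ℂ, 1 < ‖v‖ → f.eval v ≠ 0) {c d : ℂ} (hcd : ‖c‖ < ‖d‖) :
    (polarDeriv k c d f).natDegree = k - 1 := by
  obtain ⟨j, rfl⟩ : ∃ j, k = j + 1 := ⟨k - 1, by omega⟩
  have hlc : 0 < ‖f.leadingCoeff‖ :=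
    norm_pos_iff.mpr (leadingCoeff_ne_zero.mpr (ne_zero_of_natDegree_gt (hfk ▸ hk)))
  refine natDegree_eq_of_le_of_coeff_ne_zero ?_ ?_
  · refine natDegree_le_iff_coeff_eq_zero.mpr fun i hi => ?_
    rw [coeff_polarDeriv, coeff_eq_zero_of_natDegree_lt (by omega : f.natDegree < i + 1)]
    rcases (Nat.succ_le_of_lt hi).eq_or_lt with h | h
    · simp [← h]
    · simp [coeff_eq_zero_of_natDegree_lt (by omega : f.natDegree < i)]
  · rw [Nat.add_sub_cancel, coeff_polarDeriv]
    intro h0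
    have hnext : c * f.nextCoeff = -(d * ((j + 1 : ℕ) : ℂ) * f.leadingCoeff) := by
      rw [nextCoeff_of_natDegree_pos (by omega), leadingCoeff, hfk, Nat.add_sub_cancel]
      push_cast at h0 ⊢
      linear_combination h0
    -- Vieta: `‖nextCoeff‖ ≤ (j + 1) ‖leadingCoeff‖` is too small to cancel `d (j + 1) leadingCoeff`
    have hle : ‖d‖ * ((j + 1 : ℕ) * ‖f.leadingCoeff‖) ≤ ‖c‖ * ((j + 1 : ℕ) * ‖f.leadingCoeff‖) :=
      calc ‖d‖ * ((j + 1 : ℕ) * ‖f.leadingCoeff‖) = ‖c * f.nextCoeff‖ := by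
            rw [hnext, norm_neg, norm_mul, norm_mul, Complex.norm_natCast, mul_assoc]
        _ ≤ ‖c‖ * ((j + 1 : ℕ) * ‖f.leadingCoeff‖) := by
            rw [norm_mul, ← hfk]
            exact mul_le_mul_of_nonneg_left (norm_nextCoeff_le hf) (norm_nonneg c)
    exact absurd hle (not_le.mpr (mul_lt_mul_of_pos_right hcd (mul_pos (by positivity) hlc)))

theorem exists_factorization_quadratic (a b e : ℂ) :
    ∃ c₁ s₁ c₂ s₂ : ℂ, c₁ * c₂ = a ∧ c₁ * s₂ + s₁ * c₂ = b ∧ s₁ * s₂ = e := by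
  by_cases he : e = 0
  · exact ⟨a, b, 1, 0, by ring, by ring, by simp [he]⟩
  · obtain ⟨r, hr⟩ := IsAlgClosed.exists_pow_nat_eq (b ^ 2 - 4 * a * e) two_pos
    refine ⟨(b - r) / 2, e, (b + r) / (2 * e), 1, ?_, ?_, by ring⟩
    · field_simp; linear_combination -hr
    · field_simp; ring

theorem norm_lt_norm_mul_of_linear_factor {n : ℕ} (hn : 0 < n) {l0 l1 l2 : ℂ}
    (hB : AdmissibleParams n l0 l1 l2) {c s : ℂ}
    (hcs : ∀ t : ℂ, c + s * t = 0 →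
      l0 + l1 * (n : ℂ) * t + l2 * ((n : ℂ) * ((n : ℂ) - 1) / 2) * t ^ 2 = 0)
    {w : ℂ} (hw : 1 < ‖w‖) : ‖c‖ < ‖w * (c + s * (n / 2))‖ := by
  have hhalf : c + s * (n / 2) ≠ 0 := by
    intro h0
    have := hB _ (hcs _ h0)
    simp only [sub_self, norm_zero, norm_le_zero_iff, div_eq_zero_iff, Nat.cast_eq_zero] at this
    norm_num at this
    omega
  have hle : ‖c‖ ≤ ‖c + s * (n / 2)‖ := by
    by_cases hs : s = 0
    · simp [hs]
    · have h := hB (-c / s) (hcs _ (by field_simp; ring))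
      rw [show -c / s - n / 2 = -((c + s * (n / 2)) / s) by field_simp; ring, norm_neg,
        norm_div, norm_div, norm_neg] at h
      exact (div_le_div_iff_of_pos_right (norm_pos_iff.mpr hs)).mp h
  rw [norm_mul]
  exact hle.trans_lt (lt_mul_of_one_lt_left (norm_pos_iff.mpr hhalf) hw)

theorem eval_Bop (n : ℕ) (l0 l1 l2 : ℂ) (f : ℂ[X]) (w : ℂ) :
    (Bop n l0 l1 l2 f).eval w
      = l0 * f.eval w + l1 * (n / 2) * (w * (derivative f).eval w)
        + l2 / 2 * (n / 2) ^ 2 * (w ^ 2 * (derivative (derivative f)).eval w) := by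
  simp [Bop]

theorem eval_polarDeriv_polarDeriv {k : ℕ} {l0 l1 l2 c₁ s₁ c₂ s₂ : ℂ} (h0 : c₁ * c₂ = l0)
    (h1 : c₁ * s₂ + s₁ * c₂ = l1 * (k + 1 : ℕ))
    (h2 : s₁ * s₂ = l2 * (((k + 1 : ℕ) : ℂ) * ((k + 1 : ℕ) - 1) / 2)) (W : ℂ[X]) (w : ℂ) :
    (polarDeriv k c₂ (w * (c₂ + s₂ * ((k + 1 : ℕ) / 2)))
        (polarDeriv (k + 1) c₁ (w * (c₁ + s₁ * ((k + 1 : ℕ) / 2))) W)).eval w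
      = (k + 1) * k * (Bop (k + 1) l0 l1 l2 W).eval w := by
  rw [eval_polarDeriv, derivative_polarDeriv, eval_polarDeriv, eval_polarDeriv, eval_Bop]
  push_cast at h1 h2 ⊢
  linear_combination (k + 1) * k * W.eval w * h0
    + k * ((k + 1) * w / 2) * (derivative W).eval w * h1
    + ((k + 1) * w / 2) ^ 2 * (derivative (derivative W)).eval w * h2

theorem Bop_eval_ne_zero {n : ℕ} (hn : 0 < n) {l0 l1 l2 : ℂ} (hB : AdmissibleParams n l0 l1 l2)
    {W : ℂ[X]} (hW : W.natDegree = n) (hWz : ∀ v : ℂ, 1 < ‖v‖ → W.eval v ≠ 0) {w : ℂ}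
    (hw : 1 < ‖w‖) : (Bop n l0 l1 l2 W).eval w ≠ 0 := by
  rcases Nat.lt_or_ge n 2 with hn2 | hn2
  · obtain rfl : n = 1 := by omega
    have hcd := norm_lt_norm_mul_of_linear_factor hn hB (c := l0) (s := l1)
      (fun t ht => by push_cast; linear_combination ht) hw
    have hW'' : derivative (derivative W) = 0 := by
      rw [eq_C_of_natDegree_le_zero ((natDegree_derivative_le W).trans (by omega)),
        derivative_C]
    convert polarDeriv_eval_ne_zero hW one_pos hWz hcd hw using 1
    rw [eval_polarDeriv, eval_Bop, hW'', eval_zero]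
    ring
  · obtain ⟨c₁, s₁, c₂, s₂, h0, h1, h2⟩ :=
      exists_factorization_quadratic l0 (l1 * n) (l2 * ((n : ℂ) * ((n : ℂ) - 1) / 2))
    have hcd₁ := norm_lt_norm_mul_of_linear_factor hn hB (c := c₁) (s := s₁)
      (fun t ht => by linear_combination (c₂ + s₂ * t) * ht - h0 - t * h1 - t ^ 2 * h2) hw
    have hcd₂ := norm_lt_norm_mul_of_linear_factor hn hB (c := c₂) (s := s₂)
      (fun t ht => by linear_combination (c₁ + s₁ * t) * ht - h0 - t * h1 - t ^ 2 * h2) hw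
    obtain ⟨k, rfl⟩ : ∃ k, n = k + 1 := ⟨n - 1, by omega⟩
    have hk : 0 < k := by omega
    have hg := natDegree_polarDeriv hW hn hWz hcd₁
    rw [Nat.add_sub_cancel] at hg
    have := polarDeriv_eval_ne_zero hg hk
      (fun v hv => polarDeriv_eval_ne_zero hW hn hWz hcd₁ hv) hcd₂ hw
    rw [eval_polarDeriv_polarDeriv h0 h1 h2] at this
    exact right_ne_zero_of_mul this

theorem norm_sub_lt_norm_mul_sub {R : ℝ} (hR : 1 < R) {v a : ℂ} (hv : 1 ≤ ‖v‖) (ha : ‖a‖ ≤ 1) :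
    ‖v - a‖ < ‖(R : ℂ) * v - a‖ := by
  have key : ‖(R : ℂ) * v - a‖ ^ 2 - ‖v - a‖ ^ 2
      = (R ^ 2 - 1) * ‖v‖ ^ 2 - 2 * (R - 1) * (v * conj a).re := by
    simp only [Complex.sq_norm, Complex.normSq_apply, Complex.sub_re, Complex.sub_im,
      Complex.mul_re, Complex.mul_im, Complex.ofReal_re, Complex.ofReal_im, Complex.conj_re,
      Complex.conj_im]
    ring
  have hre : (v * conj a).re ≤ ‖v‖ := by
    calc (v * conj a).re ≤ ‖v * conj a‖ := Complex.re_le_norm _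
      _ ≤ ‖v‖ := by
        rw [norm_mul, Complex.norm_conj]
        exact mul_le_of_le_one_right (norm_nonneg _) ha
  refine lt_of_pow_lt_pow_left₀ 2 (norm_nonneg _) ?_
  nlinarith [mul_pos (mul_pos (sub_pos.mpr hR) (by linarith : (0 : ℝ) < ‖v‖))
    (by nlinarith : (0 : ℝ) < (R + 1) * ‖v‖ - 2)]

theorem norm_eval_eq_mul_prod_roots (f : ℂ[X]) (x : ℂ) :
    ‖f.eval x‖ = ‖f.leadingCoeff‖ * (f.roots.map fun a => ‖x - a‖).prod := by
  rw [(IsAlgClosed.splits f).eval_eq_prod_roots, norm_mul]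
  exact congrArg _ ((map_multiset_prod (normHom : ℂ →*₀ ℝ) _).trans (by rw [Multiset.map_map]; rfl))

theorem norm_eval_lt_norm_eval_mul {f : ℂ[X]} (hf0 : 0 < f.natDegree)
    (hf : ∀ v : ℂ, 1 < ‖v‖ → f.eval v ≠ 0) {R : ℝ} (hR : 1 < R) {v : ℂ} (hv : 1 < ‖v‖) :
    ‖f.eval v‖ < ‖f.eval (R * v)‖ := by
  have hroots : f.roots ≠ 0 := by
    rw [← Multiset.card_pos, ← (IsAlgClosed.splits f).natDegree_eq_card_roots]; exact hf0
  rw [norm_eval_eq_mul_prod_roots, norm_eval_eq_mul_prod_roots]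
  refine mul_lt_mul_of_pos_left (Multiset.prod_map_lt_prod_map hroots _ _ (fun a ha => ?_)
    (fun a ha => ?_)) ?_
  · exact norm_pos_iff.mpr (sub_ne_zero.mpr fun h => hf v hv (h ▸ (mem_roots'.mp ha).2))
  · exact norm_sub_lt_norm_mul_sub hR hv.le (norm_le_one_of_mem_roots hf ha)
  · exact norm_pos_iff.mpr (leadingCoeff_ne_zero.mpr (ne_zero_of_natDegree_gt hf0))

@[simp]
theorem eval_dilate (R : ℝ) (f : ℂ[X]) (w : ℂ) : (dilate R f).eval w = f.eval (R * w) := by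
  simp [dilate, eval_comp]

@[simp]
theorem coeff_dilate (R : ℝ) (f : ℂ[X]) (j : ℕ) : (dilate R f).coeff j = R ^ j * f.coeff j := by
  rw [dilate, comp_C_mul_X_coeff, mul_comm]

theorem dilate_sub_C_mul_self {n : ℕ} {f : ℂ[X]} (hfn : f.natDegree = n) (hn : 0 < n)
    (hf : ∀ v : ℂ, 1 < ‖v‖ → f.eval v ≠ 0) {R : ℝ} (hR : 1 < R) {α : ℂ} (hα : ‖α‖ ≤ 1) :
    (dilate R f - C α * f).natDegree = n
      ∧ ∀ v : ℂ, 1 < ‖v‖ → (dilate R f - C α * f).eval v ≠ 0 := by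
  refine ⟨natDegree_eq_of_le_of_coeff_ne_zero ?_ ?_, fun v hv => ?_⟩
  · refine natDegree_le_iff_coeff_eq_zero.mpr fun j hj => ?_
    simp [coeff_eq_zero_of_natDegree_lt (hfn ▸ hj : f.natDegree < j)]
  · have hRn : ‖(R : ℂ) ^ n‖ = R ^ n := by
      rw [norm_pow, Complex.norm_real, Real.norm_of_nonneg (by linarith)]
    have hRα : (R : ℂ) ^ n - α ≠ 0 := fun h => by
      nlinarith [hRn ▸ congrArg norm (sub_eq_zero.mp h), one_lt_pow₀ hR hn.ne']
    simpa [← sub_mul, ← hfn] using mul_ne_zero hRα (leadingCoeff_ne_zero.mpr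
      (ne_zero_of_natDegree_gt (hfn ▸ hn)))
  · have hlt := norm_eval_lt_norm_eval_mul (hfn ▸ hn) hf hR hv
    rw [eval_sub, eval_mul, eval_C, eval_dilate, sub_ne_zero]
    intro h
    rw [h, norm_mul] at hlt
    exact absurd hlt (not_lt.mpr (mul_le_of_le_one_left (norm_nonneg _) hα))

theorem coeff_conjRecip {n j : ℕ} (Q : ℂ[X]) (hj : j ≤ n) :
    (conjRecip n Q).coeff j = conj (Q.coeff (n - j)) := by
  rw [conjRecip, coeff_reflect, revAt_le hj, coeff_map]

theorem natDegree_conjRecip_le {n : ℕ} {Q : ℂ[X]} (hQ : Q.natDegree ≤ n) :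
    (conjRecip n Q).natDegree ≤ n :=
  natDegree_reflect_le.trans (max_le le_rfl (natDegree_map_le.trans hQ))

theorem eval_conjRecip {n : ℕ} {Q : ℂ[X]} (hQ : Q.natDegree ≤ n) {w : ℂ} (hw : w ≠ 0) :
    (conjRecip n Q).eval w = w ^ n * conj (Q.eval (conj w)⁻¹) := by
  let := invertibleOfNonzero (inv_ne_zero hw)
  have h := eval₂_reflect_mul_pow (RingHom.id ℂ) w⁻¹ n (Q.map conj)
    (natDegree_map_le.trans hQ)
  rw [invOf_eq_inv, inv_inv, eval₂_id, ← eval, eval_map,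
    show w⁻¹ = conj (conj w)⁻¹ by simp, eval₂_at_apply, ← conjRecip] at h
  rw [← h, map_inv₀, Complex.conj_conj, mul_comm, mul_assoc, ← mul_pow, inv_mul_cancel₀ hw,
    one_pow, mul_one]

theorem conjRecip_add_C (n : ℕ) (Q : ℂ[X]) (c : ℂ) :
    conjRecip n (Q + C c) = conjRecip n Q + C (conj c) * X ^ n := by
  rw [conjRecip, conjRecip, Polynomial.map_add, Polynomial.map_C, reflect_add, reflect_C]

theorem conjRecip_eval_ne_zero {n : ℕ} {Q : ℂ[X]} (hQ : Q.natDegree ≤ n)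
    (hQz : ∀ v : ℂ, ‖v‖ < 1 → Q.eval v ≠ 0) {v : ℂ} (hv : 1 < ‖v‖) :
    (conjRecip n Q).eval v ≠ 0 := by
  have hv0 : v ≠ 0 := norm_pos_iff.mp (one_pos.trans hv)
  rw [eval_conjRecip hQ hv0]
  refine mul_ne_zero (pow_ne_zero n hv0) ((_root_.map_ne_zero _).mpr (hQz _ ?_))
  rw [norm_inv, Complex.norm_conj]
  exact inv_lt_one_of_one_lt₀ hv

theorem norm_sub_le_norm_one_sub_conj_mul {w a : ℂ} (hw : 1 ≤ ‖w‖) (ha : 1 ≤ ‖a‖) :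
    ‖w - a‖ ≤ ‖1 - conj w * a‖ := by
  have key : ‖1 - conj w * a‖ ^ 2 - ‖w - a‖ ^ 2 = (‖w‖ ^ 2 - 1) * (‖a‖ ^ 2 - 1) := by
    simp only [Complex.sq_norm, Complex.normSq_apply, Complex.sub_re, Complex.sub_im,
      Complex.mul_re, Complex.mul_im, Complex.conj_re, Complex.conj_im, Complex.one_re,
      Complex.one_im]
    ring
  refine (sq_le_sq₀ (norm_nonneg _) (norm_nonneg _)).mp ?_
  nlinarith [mul_nonneg (by nlinarith : (0 : ℝ) ≤ ‖w‖ ^ 2 - 1)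
    (by nlinarith : (0 : ℝ) ≤ ‖a‖ ^ 2 - 1)]

theorem norm_eval_le_norm_eval_conjRecip {n : ℕ} {Q : ℂ[X]} (hQ : Q.natDegree ≤ n)
    (hQz : ∀ v : ℂ, ‖v‖ < 1 → Q.eval v ≠ 0) {w : ℂ} (hw : 1 ≤ ‖w‖) :
    ‖Q.eval w‖ ≤ ‖(conjRecip n Q).eval w‖ := by
  have hw0 : w ≠ 0 := norm_pos_iff.mp (one_pos.trans_le hw)
  have hroot : ∀ a ∈ Q.roots, ‖w - a‖ ≤ ‖w‖ * ‖(conj w)⁻¹ - a‖ := by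
    intro a ha
    rw [← Complex.norm_conj w, ← norm_mul, mul_sub,
      mul_inv_cancel₀ ((_root_.map_ne_zero _).mpr hw0)]
    exact norm_sub_le_norm_one_sub_conj_mul hw (one_le_norm_of_mem_roots hQz ha)
  have hcard : Multiset.card Q.roots ≤ n :=
    (IsAlgClosed.splits Q).natDegree_eq_card_roots ▸ hQ
  rw [eval_conjRecip hQ hw0, norm_mul, norm_pow, Complex.norm_conj, norm_eval_eq_mul_prod_roots,
    norm_eval_eq_mul_prod_roots, mul_left_comm]
  refine mul_le_mul_of_nonneg_left ?_ (norm_nonneg _)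
  calc (Q.roots.map fun a => ‖w - a‖).prod
      ≤ (Q.roots.map fun a => ‖w‖ * ‖(conj w)⁻¹ - a‖).prod :=
        Multiset.prod_map_le_prod_map₀ _ _ (fun _ _ => norm_nonneg _) hroot
    _ = ‖w‖ ^ Multiset.card Q.roots * (Q.roots.map fun a => ‖(conj w)⁻¹ - a‖).prod := by
        rw [Multiset.prod_map_mul, Multiset.map_const', Multiset.prod_replicate]
    _ ≤ ‖w‖ ^ n * (Q.roots.map fun a => ‖(conj w)⁻¹ - a‖).prod :=
        mul_le_mul_of_nonneg_right (pow_le_pow_right₀ hw hcard)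
          (Multiset.prod_map_nonneg fun _ _ => norm_nonneg _)

theorem norm_coeff_le_norm_coeff_zero {n : ℕ} {Q : ℂ[X]} (hQ : Q.natDegree ≤ n)
    (hQz : ∀ v : ℂ, ‖v‖ < 1 → Q.eval v ≠ 0) : ‖Q.coeff n‖ ≤ ‖Q.coeff 0‖ := by
  rcases hQ.lt_or_eq with h | rfl
  · simp [coeff_eq_zero_of_natDegree_lt h]
  · rw [(IsAlgClosed.splits Q).coeff_zero_eq_leadingCoeff_mul_prod_roots, norm_mul, norm_mul,
      norm_pow, norm_neg, norm_one, one_pow, one_mul, ← leadingCoeff]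
    refine le_mul_of_one_le_right (norm_nonneg _) ?_
    rw [← normHom_apply, map_multiset_prod]
    exact Multiset.one_le_prod_map fun _ ha => one_le_norm_of_mem_roots hQz ha

noncomputable def BopDilateSub (n : ℕ) (l0 l1 l2 : ℂ) (R : ℝ) (α z : ℂ) : ℂ[X] →ₗ[ℂ] ℂ where
  toFun f := (Bop n l0 l1 l2 (dilate R f)).eval z - α * (Bop n l0 l1 l2 f).eval z
  map_add' f g := by
    simp only [eval_Bop, dilate, add_comp, derivative_add, eval_add]
    ring
  map_smul' a f := by
    simp only [eval_Bop, dilate, smul_comp, derivative_smul, eval_smul, smul_eq_mul,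
      RingHom.id_apply]
    ring

theorem BopDilateSub_apply (n : ℕ) (l0 l1 l2 : ℂ) (R : ℝ) (α z : ℂ) (f : ℂ[X]) :
    BopDilateSub n l0 l1 l2 R α z f = (Bop n l0 l1 l2 (dilate R f - C α * f)).eval z := by
  simp only [BopDilateSub, LinearMap.coe_mk, AddHom.coe_mk, eval_Bop, dilate,
    derivative_sub, derivative_C_mul, eval_sub, eval_mul, eval_C]
  ring

theorem BopDilateSub_C (n : ℕ) (l0 l1 l2 : ℂ) (R : ℝ) (α z c : ℂ) :
    BopDilateSub n l0 l1 l2 R α z (C c) = (1 - α) * l0 * c := by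
  simp only [BopDilateSub, LinearMap.coe_mk, AddHom.coe_mk, dilate, C_comp, eval_Bop,
    derivative_C, derivative_zero, eval_C, eval_zero, mul_zero, add_zero]
  ring

theorem eval_Bop_C_mul_X_pow (n : ℕ) (l0 l1 l2 c w : ℂ) :
    (Bop n l0 l1 l2 (C c * X ^ n)).eval w = Lam n l0 l1 l2 * c * w ^ n := by
  rw [eval_Bop, derivative_C_mul_X_pow, derivative_C_mul_X_pow]
  simp only [eval_mul, eval_C, eval_pow, eval_X, Lam]
  rcases n with _ | _ | n
  · simp
  · push_cast; ring
  · simp only [Nat.add_sub_cancel]; push_cast; ring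

theorem BopDilateSub_C_mul_X_pow (n : ℕ) (l0 l1 l2 : ℂ) (R : ℝ) (α z c : ℂ) :
    BopDilateSub n l0 l1 l2 R α z (C c * X ^ n)
      = ((R : ℂ) ^ n - α) * Lam n l0 l1 l2 * c * z ^ n := by
  simp only [BopDilateSub, LinearMap.coe_mk, AddHom.coe_mk, dilate, mul_comp, C_comp, X_pow_comp,
    mul_pow, ← mul_assoc, ← C_pow, ← C_mul, eval_Bop_C_mul_X_pow]
  ring

theorem BopDilateSub_ne_zero {n : ℕ} (hn : 0 < n) {l0 l1 l2 : ℂ}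
    (hB : AdmissibleParams n l0 l1 l2) {R : ℝ} (hR : 1 < R) {α : ℂ} (hα : ‖α‖ ≤ 1) {z : ℂ}
    (hz : 1 < ‖z‖) {f : ℂ[X]} (hfn : f.natDegree = n) (hf : ∀ v : ℂ, 1 < ‖v‖ → f.eval v ≠ 0) :
    BopDilateSub n l0 l1 l2 R α z f ≠ 0 := by
  obtain ⟨hdeg, hzero⟩ := dilate_sub_C_mul_self hfn hn hf hR hα
  rw [BopDilateSub_apply]
  exact Bop_eval_ne_zero hn hB hdeg hzero hz

theorem norm_le_of_forall_sub_mul_ne_zero {x y : ℂ} (h : ∀ μ : ℂ, ‖μ‖ < 1 → x - μ * y ≠ 0) :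
    ‖y‖ ≤ ‖x‖ := by
  by_contra! hlt
  have hy : y ≠ 0 := norm_pos_iff.mp ((norm_nonneg x).trans_lt hlt)
  refine h (x / y) ?_ (by field_simp; ring)
  rw [norm_div]
  exact (div_lt_one (norm_pos_iff.mpr hy)).mpr hlt

theorem norm_BopDilateSub_le_of_dominated {n : ℕ} (hn : 0 < n) {l0 l1 l2 : ℂ}
    (hB : AdmissibleParams n l0 l1 l2) {R : ℝ} (hR : 1 < R) {α : ℂ} (hα : ‖α‖ ≤ 1) {z : ℂ}
    (hz : 1 < ‖z‖) {F H : ℂ[X]} (hF : F.natDegree ≤ n) (hFn : F.coeff n ≠ 0)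
    (hH : H.natDegree ≤ n) (hcoeff : ‖H.coeff n‖ ≤ ‖F.coeff n‖)
    (hFz : ∀ v : ℂ, 1 < ‖v‖ → F.eval v ≠ 0) (hdom : ∀ v : ℂ, 1 < ‖v‖ → ‖H.eval v‖ ≤ ‖F.eval v‖) :
    ‖BopDilateSub n l0 l1 l2 R α z H‖ ≤ ‖BopDilateSub n l0 l1 l2 R α z F‖ := by
  refine norm_le_of_forall_sub_mul_ne_zero fun μ hμ => ?_
  have hsmall : ∀ x y : ℂ, ‖y‖ ≤ ‖x‖ → x ≠ 0 → x - μ * y ≠ 0 := fun x y hxy hx h => by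
    have hxμ : ‖x‖ = ‖μ‖ * ‖y‖ := by rw [sub_eq_zero.mp h, norm_mul]
    nlinarith [norm_pos_iff.mpr hx, norm_nonneg μ]
  have hdeg : (F - C μ * H).natDegree = n := by
    refine natDegree_eq_of_le_of_coeff_ne_zero
      (natDegree_sub_le_iff_left (natDegree_C_mul_le _ _ |>.trans hH) |>.mpr hF) ?_
    rw [coeff_sub, coeff_C_mul]
    exact hsmall _ _ hcoeff hFn
  rw [← smul_eq_mul, ← map_smul, ← map_sub, smul_eq_C_mul]
  refine BopDilateSub_ne_zero hn hB hR hα hz hdeg fun v hv => ?_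
  rw [eval_sub, eval_mul, eval_C]
  exact hsmall _ _ (hdom v hv) (hFz v hv)

section Estimates

variable {n : ℕ} {l0 l1 l2 : ℂ} {R : ℝ} {α z : ℂ}

theorem norm_BopDilateSub_le_conjRecip (hn : 0 < n) (hB : AdmissibleParams n l0 l1 l2)
    (hR : 1 < R) (hα : ‖α‖ ≤ 1) (hz : 1 < ‖z‖) {G : ℂ[X]} (hG : G.natDegree ≤ n)
    (hGz : ∀ v : ℂ, ‖v‖ < 1 → G.eval v ≠ 0) :
    ‖BopDilateSub n l0 l1 l2 R α z G‖ ≤ ‖BopDilateSub n l0 l1 l2 R α z (conjRecip n G)‖ := by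
  have hcoeff : (conjRecip n G).coeff n = conj (G.coeff 0) := by
    rw [coeff_conjRecip G le_rfl, Nat.sub_self]
  refine norm_BopDilateSub_le_of_dominated hn hB hR hα hz (natDegree_conjRecip_le hG) ?_ hG ?_
    (fun v hv => conjRecip_eval_ne_zero hG hGz hv)
    (fun v hv => norm_eval_le_norm_eval_conjRecip hG hGz hv.le)
  · rw [hcoeff, map_ne_zero_iff _ (RingHom.injective _), coeff_zero_eq_eval_zero]
    exact hGz 0 (by simp)
  · rw [hcoeff, Complex.norm_conj]
    exact norm_coeff_le_norm_coeff_zero hG hGz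

theorem norm_BopDilateSub_C_mul_X_pow_le_conjRecip (hn : 0 < n)
    (hB : AdmissibleParams n l0 l1 l2) (hR : 1 < R) (hα : ‖α‖ ≤ 1) (hz : 1 < ‖z‖) {P : ℂ[X]}
    (hP : P.natDegree ≤ n) (hPz : ∀ v : ℂ, ‖v‖ < 1 → P.eval v ≠ 0) {m : ℝ} (hm : 0 ≤ m)
    (hPm : ∀ u : ℂ, ‖u‖ ≤ 1 → m ≤ ‖P.eval u‖) :
    ‖BopDilateSub n l0 l1 l2 R α z (C (m : ℂ) * X ^ n)‖
      ≤ ‖BopDilateSub n l0 l1 l2 R α z (conjRecip n P)‖ := by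
  have hcoeff : (conjRecip n P).coeff n = conj (P.eval 0) := by
    rw [coeff_conjRecip P le_rfl, Nat.sub_self, coeff_zero_eq_eval_zero]
  refine norm_BopDilateSub_le_of_dominated hn hB hR hα hz (natDegree_conjRecip_le hP) ?_
    (natDegree_C_mul_X_pow_le _ _) ?_ (fun v hv => conjRecip_eval_ne_zero hP hPz hv) ?_
  · rw [hcoeff, map_ne_zero_iff _ (RingHom.injective _)]
    exact hPz 0 (by simp)
  · rw [hcoeff, Complex.norm_conj, coeff_C_mul_X_pow, if_pos rfl, Complex.norm_real,
      Real.norm_of_nonneg hm]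
    exact hPm 0 (by simp)
  · intro v hv
    have hv0 : v ≠ 0 := norm_pos_iff.mp (one_pos.trans hv)
    rw [eval_conjRecip hP hv0, eval_mul, eval_C, eval_pow, eval_X, norm_mul, norm_mul,
      Complex.norm_real, Real.norm_of_nonneg hm, Complex.norm_conj, mul_comm]
    refine mul_le_mul_of_nonneg_left (hPm _ ?_) (norm_nonneg _)
    rw [norm_inv, Complex.norm_conj]
    exact inv_le_one_of_one_le₀ hv.le

end Estimates

theorem minModulus_nonneg (f : ℂ → ℂ) : 0 ≤ minModulus f :=
  Real.sInf_nonneg (by rintro _ ⟨w, -, rfl⟩; exact norm_nonneg _)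

theorem minModulus_le_norm_eval {P : ℂ[X]} (hPz : ∀ v : ℂ, ‖v‖ < 1 → P.eval v ≠ 0) {u : ℂ}
    (hu : ‖u‖ ≤ 1) : minModulus (fun w => P.eval w) ≤ ‖P.eval u‖ := by
  have hcircle : ∀ w : ℂ, ‖w‖ = 1 → minModulus (fun w => P.eval w) ≤ ‖P.eval w‖ := fun w hw =>
    csInf_le ⟨0, by rintro _ ⟨v, -, rfl⟩; exact norm_nonneg _⟩ ⟨w, hw, rfl⟩
  have hm0 := minModulus_nonneg fun w => P.eval w
  generalize minModulus (fun w => P.eval w) = m at hcircle hm0 ⊢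
  rcases hm0.eq_or_lt with rfl | hm
  · exact norm_nonneg _
  -- minimum modulus principle: apply the maximum modulus principle to `1 / P`
  have hne : ∀ v : ℂ, ‖v‖ ≤ 1 → P.eval v ≠ 0 := fun v hv h0 => by
    rcases hv.lt_or_eq with hv | hv
    · exact hPz v hv h0
    · exact absurd (hcircle v hv) (by simpa [h0] using hm)
  have hinv : ‖(P.eval u)⁻¹‖ ≤ m⁻¹ := by
    refine Complex.norm_le_of_forall_mem_frontier_norm_le (f := fun v => (P.eval v)⁻¹)
      (U := ball 0 1) isBounded_ball
      (DifferentiableOn.diffContOnCl ?_) (fun w hw => ?_) ?_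
    · rw [closure_ball _ one_ne_zero]
      exact P.differentiable.differentiableOn.inv fun v hv => hne v (mem_closedBall_zero_iff.mp hv)
    · rw [frontier_ball _ one_ne_zero, mem_sphere_zero_iff_norm] at hw
      rw [norm_inv]
      exact inv_anti₀ hm (hcircle w hw)
    · rwa [closure_ball _ one_ne_zero, mem_closedBall_zero_iff]
  rw [norm_inv] at hinv
  exact (inv_le_inv₀ (norm_pos_iff.mpr (hne u hu)) hm).mp hinv

theorem norm_le_sub_add_of_forall_norm_lt_one {x y b d : ℂ} (hd : ‖d‖ ≤ ‖y‖)
    (h : ∀ t : ℂ, ‖t‖ < 1 → ‖x + t * b‖ ≤ ‖y + conj t * d‖) : ‖x‖ ≤ ‖y‖ - ‖d‖ + ‖b‖ := by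
  have hclosed : ∀ t : ℂ, ‖t‖ ≤ 1 → ‖x + t * b‖ ≤ ‖y + conj t * d‖ := by
    have hs : IsClosed {t : ℂ | ‖x + t * b‖ ≤ ‖y + conj t * d‖} :=
      isClosed_le (by fun_prop) (by fun_prop)
    intro t ht
    refine hs.closure_subset_iff.mpr (fun s hs => h s (mem_ball_zero_iff.mp hs)) ?_
    rwa [closure_ball _ one_ne_zero, mem_closedBall_zero_iff]
  by_cases hd0 : d = 0
  · have := h 0 (by simp)
    simp only [hd0, mul_zero, zero_mul, add_zero, norm_zero, sub_zero] at this ⊢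
    linarith [norm_nonneg b]
  have hy : y ≠ 0 := norm_pos_iff.mp ((norm_pos_iff.mpr hd0).trans_le hd)
  -- rotate `d` so that it points against `y`
  set ω : ℂ := -(‖d‖ * y) / (‖y‖ * d)
  have hω : ‖ω‖ = 1 := by
    rw [norm_div, norm_neg, norm_mul, norm_mul, Complex.norm_real, Complex.norm_real, norm_norm,
      norm_norm, mul_comm, div_self (by positivity)]
  have hyω : ‖y + ω * d‖ = ‖y‖ - ‖d‖ := by
    have hy' : (‖y‖ : ℂ) ≠ 0 := by exact_mod_cast (norm_pos_iff.mpr hy).ne'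
    rw [show y + ω * d = (((‖y‖ - ‖d‖) / ‖y‖ : ℝ) : ℂ) * y by
        simp only [ω]; push_cast; field_simp; ring,
      norm_mul, Complex.norm_real, Real.norm_of_nonneg (div_nonneg (sub_nonneg.mpr hd)
      (norm_nonneg _)), div_mul_cancel₀ _ (norm_pos_iff.mpr hy).ne']
  have := hclosed (conj ω) (by rw [Complex.norm_conj, hω])
  rw [Complex.conj_conj, hyω] at this
  have htri := norm_sub_le (x + conj ω * b) (conj ω * b)
  rw [add_sub_cancel_right, norm_mul, Complex.norm_conj, hω, one_mul] at htri
  linarith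

theorem norm_BopDilateSub_le_conjRecip_sub_minModulus {n : ℕ} (hn : 0 < n) {l0 l1 l2 : ℂ}
    (hB : AdmissibleParams n l0 l1 l2) {R : ℝ} (hR : 1 < R) {α : ℂ} (hα : ‖α‖ ≤ 1) {z : ℂ}
    (hz : 1 < ‖z‖) {P : ℂ[X]} (hP : P.natDegree ≤ n) (hPz : ∀ v : ℂ, ‖v‖ < 1 → P.eval v ≠ 0) :
    ‖BopDilateSub n l0 l1 l2 R α z P‖
      ≤ ‖BopDilateSub n l0 l1 l2 R α z (conjRecip n P)‖
        - (‖(R : ℂ) ^ n - α‖ * ‖Lam n l0 l1 l2‖ - ‖1 - α‖ * ‖l0‖)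
          * minModulus (fun w => P.eval w) := by
  set m := minModulus fun w => P.eval w
  have hm : 0 ≤ m := minModulus_nonneg _
  have hPm : ∀ u : ℂ, ‖u‖ ≤ 1 → m ≤ ‖P.eval u‖ := fun u hu => minModulus_le_norm_eval hPz hu
  -- `P + t m` has no zeros in the open disk for `‖t‖ < 1`; compare it with its reciprocal
  have hfamily : ∀ t : ℂ, ‖t‖ < 1 →
      ‖BopDilateSub n l0 l1 l2 R α z P + t * ((1 - α) * l0 * m)‖
        ≤ ‖BopDilateSub n l0 l1 l2 R α z (conjRecip n P)
          + conj t * (((R : ℂ) ^ n - α) * Lam n l0 l1 l2 * m * z ^ n)‖ := by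
    intro t ht
    have hGz : ∀ v : ℂ, ‖v‖ < 1 → (P + C (t * m)).eval v ≠ 0 := by
      intro v hv h0
      rw [eval_add, eval_C, add_eq_zero_iff_eq_neg] at h0
      have hPv : ‖P.eval v‖ = ‖t‖ * m := by
        rw [h0, norm_neg, norm_mul, Complex.norm_real, Real.norm_of_nonneg hm]
      have hm0 : m = 0 := by nlinarith [hPm v hv.le, norm_nonneg t]
      exact hPz v hv (norm_eq_zero.mp (by rw [hPv, hm0, mul_zero]))
    have := norm_BopDilateSub_le_conjRecip hn hB hR hα hz (natDegree_add_C.trans_le hP) hGz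
    rw [conjRecip_add_C, map_add, map_add, BopDilateSub_C, BopDilateSub_C_mul_X_pow, map_mul,
      Complex.conj_ofReal] at this
    convert this using 3 <;> ring
  have hmono := norm_BopDilateSub_C_mul_X_pow_le_conjRecip hn hB hR hα hz hP hPz hm hPm
  rw [BopDilateSub_C_mul_X_pow] at hmono
  have key := norm_le_sub_add_of_forall_norm_lt_one hmono hfamily
  rw [norm_mul, norm_mul, norm_mul, norm_mul, norm_mul, norm_pow, Complex.norm_real,
    Real.norm_of_nonneg hm] at key
  have hzn : 1 ≤ ‖z‖ ^ n := one_le_pow₀ hz.le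
  nlinarith [mul_le_mul_of_nonneg_left hzn
    (by positivity : 0 ≤ ‖(R : ℂ) ^ n - α‖ * ‖Lam n l0 l1 l2‖ * m)]

theorem continuous_BopDilateSub (n : ℕ) (l0 l1 l2 : ℂ) (R : ℝ) (α : ℂ) (f : ℂ[X]) :
    Continuous fun z => BopDilateSub n l0 l1 l2 R α z f := by
  simp only [BopDilateSub_apply]
  exact Polynomial.continuous _

/-- Lemma 5 of the paper. -/
theorem Bn_compare_with_conjugate_reciprocal_min_term
    (n : ℕ) (hn : 1 ≤ n) (l0 l1 l2 : ℂ) (hB : AdmissibleParams n l0 l1 l2)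
    (P : Polynomial ℂ) (hdeg : P.degree ≤ n)
    (hP : ∀ z : ℂ, ‖z‖ < 1 → P.eval z ≠ 0)
    (α : ℂ) (hα : ‖α‖ ≤ 1) (R : ℝ) (hR : 1 < R)
    (z : ℂ) (hz : 1 ≤ ‖z‖) :
    ‖((Bop n l0 l1 l2 (dilate R P)).eval z
        - α * (Bop n l0 l1 l2 P).eval z)‖
      ≤ ‖((Bop n l0 l1 l2 (dilate R (conjRecip n P))).eval z
          - α * (Bop n l0 l1 l2 (conjRecip n P)).eval z)‖
        - (‖((R : ℂ) ^ n - α)‖ * ‖(Lam n l0 l1 l2)‖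
            - ‖(1 - α)‖ * ‖l0‖)
          * minModulus (fun w => P.eval w) := by
  -- the estimate holds on `‖z‖ > 1` and both sides are continuous in `z`
  have hclosed : IsClosed {w : ℂ | ‖BopDilateSub n l0 l1 l2 R α w P‖
      ≤ ‖BopDilateSub n l0 l1 l2 R α w (conjRecip n P)‖
        - (‖(R : ℂ) ^ n - α‖ * ‖Lam n l0 l1 l2‖ - ‖1 - α‖ * ‖l0‖)
          * minModulus (fun w => P.eval w)} :=
    isClosed_le (continuous_BopDilateSub _ _ _ _ _ _ _).norm
      ((continuous_BopDilateSub _ _ _ _ _ _ _).norm.sub continuous_const)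
  have hsub := (hclosed.closure_subset_iff (s := (closedBall 0 1)ᶜ)).mpr fun w hw =>
    norm_BopDilateSub_le_conjRecip_sub_minModulus hn hB hR hα
      (by simpa using hw : 1 < ‖w‖) (natDegree_le_of_degree_le hdeg) hP
  rw [closure_compl, interior_closedBall _ one_ne_zero] at hsub
  exact hsub (by simpa using hz)
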